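/- arXiv:2604.17437 — 7 statements merged into one kernel-verified Lean document; each statement's English description precedes it below -/
import Mathlib

section
/- For all integers i ≥ j ≥ 1, the polynomials p_n satisfy the identity p_i(x)·p_j(x) = p_{i+1}(x)·p_{j-1}(x) + x^j·p_{i-j}(x). -/
open Polynomial

theorem stmt_1 (p : ℕ → Polynomial ℤ)
    (h0 : p 0 = 1) (h1 : p 1 = 1)
    (hrec : ∀ n : ℕ, 1 ≤ n → p (n + 1) = p n - X * p (n - 1)) :
    ∀ i j : ℕ, 1 ≤ j → j ≤ i →
      p i * p j = p (i + 1) * p (j - 1) + X ^ j * p (i - j) := by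
  intro i j
  induction j generalizing i with
  | zero => omega
  | succ j ih =>
    intro _ hij
    cases j with
    | zero =>
      obtain ⟨i', rfl⟩ : ∃ i', i = i' + 1 := ⟨i - 1, by omega⟩
      have h := hrec (i' + 1) (by omega)
      simp only [Nat.add_sub_cancel] at h ⊢
      rw [h, h1, h0]
      ring
    | succ j' =>
      obtain ⟨i', rfl⟩ : ∃ i', i = i' + 1 := ⟨i - 1, by omega⟩
      have hih := ih i' (by omega) (by omega)
      have hi := hrec (i' + 1) (by omega)
      have hj := hrec (j' + 1) (by omega)
      simp only [Nat.add_sub_cancel] at hih hi hj ⊢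
      have hsub : i' + 1 - (j' + 2) = i' - (j' + 1) := by omega
      rw [hsub, hj, hi]
      ring_nf
      ring_nf at hih
      linear_combination (X : Polynomial ℤ) * hih
end

section
/- For a partition ξ = (ξ_1 ≥ ... ≥ ξ_ℓ > 0) with ℓ ≥ 2, define ξ⁻ as the partition (ξ_1, ..., ξ_{ℓ-2}, ξ_{ℓ-1} - ξ_ℓ) and ξ⁺ as the partition obtained by sorting (ξ_1, ..., ξ_{ℓ-2}, ξ_{ℓ-1}+1, ξ_ℓ-1). Then p_{ξ⁺}(x) + x^{ξ_ℓ}·p_{ξ⁻}(x) = p_ξ(x), where p_ξ(x) = Π_{i=1}^ℓ p_{ξ_i}(x). -/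
/-! Everything reduces to the two-part identity
`p (a + 1) * p (b - 1) + X ^ b * p (a - b) = p a * p b` for `1 ≤ b ≤ a`, since the other parts of
the partition contribute the same factor to all three products. Writing `a = d + c + 1`, `b = c + 1`,
the identity is proved by induction on `c` with `d` fixed: expanding `p (d + c + 3)` and `p (c + 2)`
by the recurrence, the step is `X` times the previous case. -/

open Polynomial

section Recurrence

variable {p : ℕ → Polynomial ℤ} (h0 : p 0 = 1) (h1 : p 1 = 1)
  (hrec : ∀ n : ℕ, 1 ≤ n → p (n + 1) = p n - X * p (n - 1))

include hrec in
lemma rec_add_two (n : ℕ) : p (n + 2) = p (n + 1) - X * p n :=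
  hrec (n + 1) n.succ_pos

include h0 h1 hrec in
lemma mul_add_X_pow_mul_eq (d c : ℕ) :
    p (d + c + 2) * p c + X ^ (c + 1) * p d = p (d + c + 1) * p (c + 1) := by
  induction c with
  | zero =>
    rw [h0, h1, rec_add_two hrec]
    ring
  | succ c ih =>
    rw [show d + (c + 1) + 2 = d + c + 1 + 2 by ring, show d + (c + 1) + 1 = d + c + 2 by ring,
      rec_add_two hrec (d + c + 1), rec_add_two hrec c]
    linear_combination (X : Polynomial ℤ) * ih

include h0 h1 hrec in
lemma mul_add_X_pow_mul_eq_of_le {a b : ℕ} (hb : 0 < b) (hba : b ≤ a) :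
    p (a + 1) * p (b - 1) + X ^ b * p (a - b) = p a * p b := by
  obtain ⟨c, rfl⟩ := Nat.exists_eq_add_of_le' hb
  obtain ⟨d, rfl⟩ := Nat.exists_eq_add_of_le' hba
  have := mul_add_X_pow_mul_eq h0 h1 hrec d c
  rwa [Nat.add_sub_cancel, Nat.add_sub_cancel, show d + (c + 1) + 1 = d + c + 2 by ring,
    show d + (c + 1) = d + c + 1 by ring]

end Recurrence

theorem stmt_3 (p : ℕ → Polynomial ℤ)
    (h0 : p 0 = 1) (h1 : p 1 = 1)
    (hrec : ∀ n : ℕ, 1 ≤ n → p (n + 1) = p n - X * p (n - 1))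
    (l : List ℕ) (a b : ℕ)
    (hsort : List.Pairwise (· ≥ ·) (l ++ [a, b]))
    (hpos : ∀ x ∈ l ++ [a, b], 0 < x) :
    ((l ++ [a + 1, b - 1]).map p).prod + X ^ b * ((l ++ [a - b]).map p).prod
      = ((l ++ [a, b]).map p).prod := by
  have hb : 0 < b := hpos b (by simp)
  have hba : b ≤ a :=
    (List.pairwise_cons.mp (hsort.sublist (List.sublist_append_right l [a, b]))).1 b (by simp)
  have key := mul_add_X_pow_mul_eq_of_le h0 h1 hrec hb hba
  simp only [List.map_append, List.prod_append, List.map_cons, List.map_nil, List.prod_cons,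
    List.prod_nil]
  linear_combination (l.map p).prod * key
end

section
/- The q-Bernstein operators satisfy the commutation relation B_m ∘ B_{m+1} = q · B_{m+1} ∘ B_m for all m ≥ 0, as operators on polynomials in two variables. -/
/-- The q-Bernstein operator on (two-variable) functions over a field. -/
def qBernstein {K : Type*} [Field K] (q : K) (m : ℕ) (f : K → K → K) : K → K → K :=
  fun x₁ x₂ => (x₁ ^ (m + 1) * f (q * x₁) x₂ - x₂ ^ (m + 1) * f x₁ (q * x₂)) / (x₁ - x₂)

theorem stmt_6 {K : Type*} [Field K] (q : K) (m : ℕ) (f : K → K → K)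
    (x₁ x₂ : K) (h : x₁ ≠ x₂) (h1 : q * x₁ ≠ x₂) (h2 : x₁ ≠ q * x₂) :
    qBernstein q m (qBernstein q (m + 1) f) x₁ x₂
      = q * qBernstein q (m + 1) (qBernstein q m f) x₁ x₂ := by
  have hs : x₁ - x₂ ≠ 0 := sub_ne_zero.mpr h
  have hs1 : q * x₁ - x₂ ≠ 0 := sub_ne_zero.mpr h1
  have hs2 : x₁ - q * x₂ ≠ 0 := sub_ne_zero.mpr h2
  simp only [qBernstein]
  field_simp
  ring
end

section
/- For integers μ₁ ≥ μ₂ ≥ 1, the two-variable modified Hall–Littlewood polynomials, defined via iterated q-Bernstein operators as Q'_{(a,b)}(x₁,x₂;q) = B_a(B_b(1)), satisfy the recursion Q'_{(μ₁,μ₂)}(x₁,x₂;q) = q·Q'_{(μ₁+1,μ₂-1)}(x₁,x₂;q) + (x₁x₂)^{μ₂}·h_{μ₁-μ₂}(x₁,x₂). -/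
/-- The complete homogeneous symmetric polynomial in two variables. -/
def hpoly {K : Type*} [Field K] (k : ℕ) (x₁ x₂ : K) : K :=
  ∑ i ∈ Finset.range (k + 1), x₁ ^ i * x₂ ^ (k - i)

/-- Two-row modified Hall–Littlewood polynomial via iterated q-Bernstein operators. -/
def Qmod2 {K : Type*} [Field K] (q : K) (a b : ℕ) : K → K → K :=
  qBernstein q a (qBernstein q b (fun _ _ => (1 : K)))

theorem stmt_8 {K : Type*} [Field K] (q : K) (μ₁ μ₂ : ℕ)
    (hμ : μ₂ ≤ μ₁) (hμ2 : 1 ≤ μ₂) (x₁ x₂ : K)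
    (h : x₁ ≠ x₂) (h1 : q * x₁ ≠ x₂) (h2 : x₁ ≠ q * x₂) :
    Qmod2 q μ₁ μ₂ x₁ x₂
      = q * Qmod2 q (μ₁ + 1) (μ₂ - 1) x₁ x₂
        + (x₁ * x₂) ^ μ₂ * hpoly (μ₁ - μ₂) x₁ x₂ := by
  obtain ⟨d, rfl⟩ := Nat.exists_eq_add_of_le hμ2
  obtain ⟨c, rfl⟩ := Nat.exists_eq_add_of_le hμ
  have hd : x₁ - x₂ ≠ 0 := sub_ne_zero.mpr h
  have hd1 : q * x₁ - x₂ ≠ 0 := sub_ne_zero.mpr h1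
  have hd2 : x₁ - q * x₂ ≠ 0 := sub_ne_zero.mpr h2
  have hsub1 : 1 + d + c - (1 + d) = c := by omega
  have hsub2 : 1 + d - 1 = d := by omega
  have hh : hpoly c x₁ x₂ = (x₁ ^ (c + 1) - x₂ ^ (c + 1)) / (x₁ - x₂) := by
    rw [eq_div_iff hd]
    simpa [hpoly] using geom_sum₂_mul x₁ x₂ (c + 1)
  simp only [Qmod2, qBernstein, hsub1, hsub2, hh, mul_one]
  field_simp
  ring
end

section
/- For a partition μ of length n ≥ 2 with μ_n > 0, defining Q'_μ(x₁,x₂;q) = B_{μ₁}∘⋯∘B_{μ_n}(1), one has the recursion Q'_μ(x₁,x₂;q) = q^{n-1-μ'_{μ_{n-1}+1}}·Q'_{μ⁺}(x₁,x₂;q) + q^{(n-2)μ_n}·(x₁x₂)^{μ_n}·Q'_{μ⁻}(x₁,x₂;q), where μ⁻ = (μ₁,...,μ_{n-2}, μ_{n-1}-μ_n), μ⁺ is the sorted rearrangement of (μ₁,...,μ_{n-2}, μ_{n-1}+1, μ_n-1), and μ' denotes the conjugate partition. -/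
/-- Modified Hall–Littlewood polynomial `Q'_μ = B_{μ₁} ⋯ B_{μ_n}(1)` for a list `μ`. -/
def Qmod {K : Type*} [Field K] (q : K) : List ℕ → (K → K → K)
  | [] => fun _ _ => (1 : K)
  | m :: rest => qBernstein q m (Qmod q rest)

/-- Sort a list of naturals into weakly decreasing order. -/
def sortDesc (l : List ℕ) : List ℕ := l.mergeSort (fun a b => decide (b ≤ a))

/-!
Induction on the parts above the last two. `B_c` only evaluates its argument at `(q x₁, x₂)` and
`(x₁, q x₂)`, where the genericity hypothesis still holds with one step less, and it turns the
factor `(x₁ x₂)^b` into `q^b (x₁ x₂)^b`. If the new part `c` exceeds `a`, it stays on top of `μ⁺`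
and raises `μ'_{a+1}` by one, so the exponent of the first term is unchanged. If `c = a`, then
`a + 1` is the top part of `μ⁺` and the relation `B_a B_{a+1} = q B_{a+1} B_a` moves it to the
front at the cost of one more power of `q`. The base case `μ = (a, b)` is a direct computation.
-/

section Sorting

lemma sortDesc_pairwise (L : List ℕ) : (sortDesc L).Pairwise (· ≥ ·) := by
  simpa [sortDesc] using List.pairwise_mergeSort (le := fun a b : ℕ => decide (b ≤ a))
    (fun a b c h₁ h₂ => by simp_all; omega) (fun a b => by simp; omega) L

lemma sortDesc_eq_of_perm {L M : List ℕ} (h : L.Perm M) (hM : M.Pairwise (· ≥ ·)) :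
    sortDesc L = M :=
  have : Std.Antisymm (· ≥ · : ℕ → ℕ → Prop) := ⟨fun _ _ h₁ h₂ => le_antisymm h₂ h₁⟩
  ((List.mergeSort_perm L _).trans h).eq_of_pairwise' (sortDesc_pairwise L) hM

lemma sortDesc_cons_of_forall_le {c : ℕ} {L : List ℕ} (h : ∀ x ∈ L, x ≤ c) :
    sortDesc (c :: L) = c :: sortDesc L :=
  sortDesc_eq_of_perm ((List.mergeSort_perm L _).symm.cons c)
    (List.pairwise_cons.mpr ⟨fun x hx => h x ((List.mergeSort_perm L _).mem_iff.mp hx),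
      sortDesc_pairwise L⟩)

variable {l : List ℕ} {a b : ℕ}

lemma le_of_pairwise_append_pair (hsort : (l ++ [a, b]).Pairwise (· ≥ ·)) : b ≤ a := by
  simpa using (List.pairwise_append.mp hsort).2.1

lemma countP_append_pair_eq_zero (hsort : (l ++ [a, b]).Pairwise (· ≥ ·))
    (hl : ∀ x ∈ l, x ≤ a) : (l ++ [a, b]).countP (fun x => decide (a + 1 ≤ x)) = 0 := by
  have hab := le_of_pairwise_append_pair hsort
  simp only [List.countP_eq_zero, List.mem_append, List.mem_cons, List.not_mem_nil, or_false,
    decide_eq_true_eq, not_le]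
  rintro x (hx | rfl | rfl)
  exacts [Nat.lt_succ_of_le (hl x hx), Nat.lt_succ_self x, Nat.lt_succ_of_le hab]

lemma sortDesc_append_succ_pred (hsort : (l ++ [a, b]).Pairwise (· ≥ ·))
    (hl : ∀ x ∈ l, x ≤ a) : sortDesc (l ++ [a + 1, b - 1]) = (a + 1) :: (l ++ [b - 1]) := by
  have hab := le_of_pairwise_append_pair hsort
  have hle : ∀ x ∈ l ++ [b - 1], x ≤ a + 1 := by
    simp only [List.mem_append, List.mem_singleton]
    rintro x (hx | rfl)
    exacts [Nat.le_succ_of_le (hl x hx), by omega]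
  refine sortDesc_eq_of_perm List.perm_middle (List.pairwise_cons.mpr ⟨hle, ?_⟩)
  simp only [List.pairwise_append, List.pairwise_singleton, forall_eq, true_and, List.mem_cons,
    List.not_mem_nil, or_false, forall_eq_or_imp] at hsort ⊢
  exact ⟨hsort.1, fun x hx => (Nat.sub_le b 1).trans (hsort.2.2 x hx).2⟩

lemma sortDesc_cons_append_succ_pred {c : ℕ} (hc : ∀ x ∈ l ++ [a, b], x ≤ c) (hac : a < c) :
    sortDesc (c :: (l ++ [a + 1, b - 1])) = c :: sortDesc (l ++ [a + 1, b - 1]) := by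
  refine sortDesc_cons_of_forall_le ?_
  simp only [List.mem_append, List.mem_cons, List.not_mem_nil, or_false] at hc ⊢
  rintro x (hx | rfl | rfl)
  exacts [hc x (.inl hx), hac, (Nat.sub_le b 1).trans (hc b (.inr (.inr rfl)))]

end Sorting

section Bernstein

variable {K : Type*} [Field K] (q : K)

lemma qBernstein_apply_of_eq_linear_combination {m b : ℕ} {f g h : K → K → K} {α β x₁ x₂ : K}
    (h₁ : f (q * x₁) x₂ = α * g (q * x₁) x₂ + β * (q * x₁ * x₂) ^ b * h (q * x₁) x₂)
    (h₂ : f x₁ (q * x₂) = α * g x₁ (q * x₂) + β * (x₁ * (q * x₂)) ^ b * h x₁ (q * x₂)) :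
    qBernstein q m f x₁ x₂
      = α * qBernstein q m g x₁ x₂ + β * q ^ b * (x₁ * x₂) ^ b * qBernstein q m h x₁ x₂ := by
  simp only [qBernstein, h₁, h₂]
  ring

lemma qBernstein_qBernstein_succ {m : ℕ} (f : K → K → K) {x₁ x₂ : K}
    (h₁ : q * x₁ ≠ x₂) (h₂ : x₁ ≠ q * x₂) :
    qBernstein q m (qBernstein q (m + 1) f) x₁ x₂
      = q * qBernstein q (m + 1) (qBernstein q m f) x₁ x₂ := by
  have h₁ : q * x₁ - x₂ ≠ 0 := sub_ne_zero_of_ne h₁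
  have h₂ : x₁ - q * x₂ ≠ 0 := sub_ne_zero_of_ne h₂
  simp only [qBernstein]
  field_simp
  ring

lemma Qmod_pair {a b : ℕ} (hab : b ≤ a) (hb : 0 < b) {x₁ x₂ : K}
    (h₁ : q * x₁ ≠ x₂) (h₂ : x₁ ≠ q * x₂) :
    Qmod q [a, b] x₁ x₂
      = q * Qmod q [a + 1, b - 1] x₁ x₂ + (x₁ * x₂) ^ b * Qmod q [a - b] x₁ x₂ := by
  obtain ⟨d, rfl⟩ : ∃ d, b = d + 1 := ⟨b - 1, by omega⟩
  obtain ⟨c, rfl⟩ : ∃ c, a = c + (d + 1) := ⟨a - (d + 1), by omega⟩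
  have h₁ : q * x₁ - x₂ ≠ 0 := sub_ne_zero_of_ne h₁
  have h₂ : x₁ - q * x₂ ≠ 0 := sub_ne_zero_of_ne h₂
  simp only [Qmod, qBernstein, Nat.add_sub_cancel]
  field_simp
  ring

end Bernstein

section GenericPoint

variable {K : Type*} [Field K] {q x₁ x₂ : K} {n : ℕ}

lemma forall_pow_mul_ne_of_succ_left (hx : ∀ i j : ℕ, i + j ≤ n + 1 → q ^ i * x₁ ≠ q ^ j * x₂) :
    ∀ i j : ℕ, i + j ≤ n → q ^ i * (q * x₁) ≠ q ^ j * x₂ := fun i j hij => by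
  simpa only [pow_succ, mul_assoc] using hx (i + 1) j (by omega)

lemma forall_pow_mul_ne_of_succ_right (hx : ∀ i j : ℕ, i + j ≤ n + 1 → q ^ i * x₁ ≠ q ^ j * x₂) :
    ∀ i j : ℕ, i + j ≤ n → q ^ i * x₁ ≠ q ^ j * (q * x₂) := fun i j hij => by
  simpa only [pow_succ, mul_assoc] using hx i (j + 1) (by omega)

lemma mul_ne_and_ne_mul_of_forall_pow_mul_ne
    (hx : ∀ i j : ℕ, i + j ≤ n + 1 → q ^ i * x₁ ≠ q ^ j * x₂) : q * x₁ ≠ x₂ ∧ x₁ ≠ q * x₂ :=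
  ⟨by simpa using hx 1 0 (by omega), by simpa using hx 0 1 (by omega)⟩

end GenericPoint

theorem stmt_9 {K : Type*} [Field K] (q : K) (l : List ℕ) (a b : ℕ)
    (hsort : List.Pairwise (· ≥ ·) (l ++ [a, b])) (hb : 0 < b)
    (x₁ x₂ : K)
    (hx : ∀ i j : ℕ, i + j ≤ l.length + 2 → q ^ i * x₁ ≠ q ^ j * x₂) :
    Qmod q (l ++ [a, b]) x₁ x₂
      = q ^ (l.length + 2 - 1 - (l ++ [a, b]).countP (fun x => decide (a + 1 ≤ x)))
          * Qmod q (sortDesc (l ++ [a + 1, b - 1])) x₁ x₂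
        + q ^ (l.length * b) * (x₁ * x₂) ^ b * Qmod q (l ++ [a - b]) x₁ x₂ := by
  induction l generalizing x₁ x₂ with
  | nil =>
    have hab := le_of_pairwise_append_pair hsort
    obtain ⟨h₁, h₂⟩ := mul_ne_and_ne_mul_of_forall_pow_mul_ne hx
    rw [List.nil_append, sortDesc_eq_of_perm (.refl _) (by simp; omega)]
    simpa [show ¬ a < b by omega] using Qmod_pair q hab hb h₁ h₂
  | cons c l ih =>
    obtain ⟨hc, hsortl⟩ := List.pairwise_cons.mp hsort
    simp only [List.length_cons] at hx
    have IH₁ := ih hsortl (q * x₁) x₂ (forall_pow_mul_ne_of_succ_left hx)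
    have IH₂ := ih hsortl x₁ (q * x₂) (forall_pow_mul_ne_of_succ_right hx)
    rcases (hc a (by simp)).lt_or_eq with hlt | rfl
    · simp only [List.cons_append, List.length_cons, List.countP_cons, show a + 1 ≤ c from hlt,
        decide_true, if_true, Qmod, sortDesc_cons_append_succ_pred hc hlt,
        qBernstein_apply_of_eq_linear_combination q IH₁ IH₂]
      rw [show ∀ n k : ℕ, n + 1 + 2 - 1 - (k + 1) = n + 2 - 1 - k from fun _ _ => by omega]
      ring
    · obtain ⟨h₁, h₂⟩ := mul_ne_and_ne_mul_of_forall_pow_mul_ne hx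
      have hal : ∀ x ∈ l, x ≤ a := fun x hx => hc x (by simp [hx])
      rw [sortDesc_append_succ_pred hsortl hal, countP_append_pair_eq_zero hsortl hal] at IH₁ IH₂
      have hal' : ∀ x ∈ a :: l, x ≤ a := List.forall_mem_cons.mpr ⟨le_rfl, hal⟩
      rw [sortDesc_append_succ_pred hsort hal', countP_append_pair_eq_zero hsort hal']
      simp only [List.cons_append, List.length_cons, Qmod,
        qBernstein_apply_of_eq_linear_combination q IH₁ IH₂, qBernstein_qBernstein_succ q _ h₁ h₂]
      rw [show l.length + 2 - 1 - 0 = l.length + 1 by omega,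
        show l.length + 1 + 2 - 1 - 0 = l.length + 1 + 1 by omega]
      ring
end

section
/- Let μ be a partition of length n ≥ 2 with μ_n > 0, and let μ⁺ be the sorted rearrangement of (μ₁,...,μ_{n-2}, μ_{n-1}+1, μ_n-1). Then n(μ) - n(μ⁺) = n - 1 - μ'_{μ_{n-1}+1}. -/
/-- The statistic `n(μ) = Σ_i (i-1)·μ_i` for a partition given as a list
(0-indexed, so the `i`-th entry is weighted by `i`). -/
def nStat (μ : List ℕ) : ℕ := ∑ i ∈ Finset.range μ.length, i * μ.getD i 0

lemma sum_getD (t : List ℕ) : ∑ i ∈ Finset.range t.length, t.getD i 0 = t.sum := by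
  induction t with
  | nil => simp
  | cons c t ih =>
    rw [List.length_cons, Finset.sum_range_succ']
    simp only [List.getD_cons_succ, List.getD_cons_zero, List.sum_cons]
    omega

lemma nStat_nil : nStat [] = 0 := rfl

lemma nStat_cons (c : ℕ) (t : List ℕ) : nStat (c :: t) = t.sum + nStat t := by
  unfold nStat
  simp only [List.length_cons, Finset.sum_range_succ']
  simp only [List.getD_cons_succ, List.getD_cons_zero, mul_zero, add_zero, add_mul, one_mul]
  rw [Finset.sum_add_distrib, sum_getD]
  omega

lemma nStat_append (u v : List ℕ) :
    nStat (u ++ v) = nStat u + u.length * v.sum + nStat v := by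
  induction u with
  | nil => simp [nStat]
  | cons c u ih =>
    rw [List.cons_append, nStat_cons, ih, nStat_cons, List.sum_append, List.length_cons]
    ring

lemma sortDesc_eq {M L : List ℕ} (hperm : M.Perm L) (hL : List.Pairwise (· ≥ ·) L) :
    sortDesc M = L := by
  apply List.Perm.eq_of_pairwise' (r := fun x y : ℕ => x ≥ y) (hl := ((List.mergeSort_perm M _).trans hperm))
  · have := List.pairwise_mergeSort (le := fun a b : ℕ => decide (b ≤ a))
      (by intro a b c; simp; omega) (by intro a b; simp; omega) M
    simpa [ge_iff_le] using this
  · exact hL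

theorem stmt_12 (l : List ℕ) (a b : ℕ)
    (hsort : List.Pairwise (· ≥ ·) (l ++ [a, b]))
    (hpos : ∀ x ∈ l ++ [a, b], 0 < x) :
    nStat (sortDesc (l ++ [a + 1, b - 1]))
        + (l.length + 2 - 1 - (l ++ [a, b]).countP (fun x => decide (a + 1 ≤ x)))
      = nStat (l ++ [a, b]) := by
  -- basic order facts
  have hb : 0 < b := hpos b (by simp)
  have hab : b ≤ a := by
    have := (List.pairwise_append.1 hsort).2.1
    simpa using this
  have hl_ge : ∀ x ∈ l, a ≤ x := by
    intro x hx
    have := (List.pairwise_append.1 hsort).2.2 x hx a (by simp)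
    exact this
  have hl_sorted : List.Pairwise (· ≥ ·) l :=
    hsort.sublist (List.sublist_append_left _ _)
  set p : ℕ → Bool := fun x => decide (a < x) with hp
  set l₁ := l.takeWhile p with hl₁
  set l₂ := l.dropWhile p with hl₂
  have hsplit : l₁ ++ l₂ = l := List.takeWhile_append_dropWhile (p := p) (l := l)
  have hl₁mem : ∀ x ∈ l₁, a < x := by
    intro x hx
    have := List.mem_takeWhile_imp hx
    simpa [hp] using this
  -- every element of l₂ equals a
  have hl₂mem : ∀ x ∈ l₂, x = a := by
    have key : ∀ (t : List ℕ), List.Pairwise (· ≥ ·) t → ∀ x ∈ t.dropWhile p, x ≤ a := by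
      intro t
      induction t with
      | nil => simp
      | cons c t ih =>
        intro hs x hx
        by_cases hc : p c
        · rw [List.dropWhile_cons_of_pos hc] at hx
          exact ih hs.of_cons x hx
        · rw [List.dropWhile_cons_of_neg hc] at hx
          have hca : c ≤ a := by simpa [hp] using hc
          rcases List.mem_cons.1 hx with rfl | hx
          · exact hca
          · exact le_trans (List.rel_of_pairwise_cons hs hx) hca
    intro x hx
    have h1 : x ≤ a := key l hl_sorted x hx
    have h2 : a ≤ x := hl_ge x (hsplit ▸ List.mem_append_right l₁ hx)
    omega
  have hl₂sum : l₂.sum = l₂.length * a := by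
    have : l₂.sum = (List.replicate l₂.length a).sum := by
      congr 1
      exact List.eq_replicate_of_mem hl₂mem
    simpa using this
  -- identify the sorted list
  have hsd : sortDesc (l ++ [a + 1, b - 1]) = l₁ ++ (a + 1) :: (l₂ ++ [b - 1]) := by
    apply sortDesc_eq
    · have h0 : l ++ [a + 1, b - 1] = l₁ ++ (l₂ ++ [a + 1, b - 1]) := by
        rw [← hsplit]; simp
      rw [h0]
      refine List.Perm.append_left l₁ ?_
      have h1 : l₂ ++ [a + 1, b - 1] = (l₂ ++ [a + 1]) ++ [b - 1] := by simp
      rw [h1]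
      have h2 := (List.perm_append_comm (l₁ := l₂) (l₂ := [a + 1])).append_right [b - 1]
      exact h2.trans (by simp)
    · refine List.pairwise_append.mpr
        ⟨(hl_sorted.sublist (hsplit ▸ List.sublist_append_left _ _)), ?_, ?_⟩
      · rw [List.pairwise_cons]
        constructor
        · intro x hx
          rcases List.mem_append.1 hx with hx | hx
          · have := hl₂mem x hx; omega
          · simp at hx; omega
        · rw [List.pairwise_append]
          refine ⟨hl_sorted.sublist (hsplit ▸ List.sublist_append_right _ _), by simp, ?_⟩
          intro x hx y hy
          simp at hy
          have := hl₂mem x hx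
          omega
      · intro x hx y hy
        have hx' := hl₁mem x hx
        rcases List.mem_cons.1 hy with rfl | hy
        · omega
        · rcases List.mem_append.1 hy with hy | hy
          · have := hl₂mem y hy; omega
          · simp at hy; omega
  -- count
  have hcount : (l ++ [a, b]).countP (fun x => decide (a + 1 ≤ x)) = l₁.length := by
    rw [List.countP_append, ← hsplit, List.countP_append]
    have h1 : l₁.countP (fun x => decide (a + 1 ≤ x)) = l₁.length := by
      rw [List.countP_eq_length]
      intro x hx
      have := hl₁mem x hx
      simpa using this
    have h2 : l₂.countP (fun x => decide (a + 1 ≤ x)) = 0 := by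
      rw [List.countP_eq_zero]
      intro x hx
      have := hl₂mem x hx
      simp; omega
    have h3 : [a, b].countP (fun x => decide (a + 1 ≤ x)) = 0 := by
      simp [List.countP_cons]; omega
    omega
  -- now compute
  rw [hsd, hcount]
  obtain ⟨b', rfl⟩ : ∃ b', b = b' + 1 := ⟨b - 1, by omega⟩
  simp only [Nat.add_sub_cancel]
  have hlen : l.length = l₁.length + l₂.length := by rw [← hsplit]; simp
  have hsub : l.length + 2 - 1 - l₁.length = l₂.length + 1 := by omega
  rw [hsub, ← hsplit]
  simp only [nStat_append, nStat_cons, nStat_nil, List.sum_append, List.sum_cons,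
    List.sum_nil, List.length_append, hl₂sum]
  ring
end

section
/- If (μ⁺)' = μ' with one part of size μ_n removed and one part of size μ_{n-1}+1 added, i.e., (μ⁺)'_i = μ'_i - [i = μ_n] + [i = μ_{n-1}+1] for all i, then the conjugate of the sorted rearrangement μ⁺ of (μ₁,...,μ_{n-2}, μ_{n-1}+1, μ_n-1) indeed satisfies this formula, for any partition μ of length n ≥ 2 with μ_n > 0. -/
/-! Conjugate parts only see the multiset of parts, so the sorting is irrelevant, and moving one
box from the part `b` to the part `a` raises column `a + 1` and lowers column `b` by one. Since
`i ≥ 1`, the truncated `b - 1` at `b = 0` is harmless. -/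

theorem countP_sortDesc (p : ℕ → Bool) (l : List ℕ) :
    (sortDesc l).countP p = l.countP p :=
  (List.mergeSort_perm l _).countP_eq p

theorem stmt_13_general (l : List ℕ) (a b : ℕ) :
    ∀ i : ℕ, 1 ≤ i →
      (l ++ [a, b]).countP (fun x => decide (i ≤ x)) + (if i = a + 1 then 1 else 0)
        = (sortDesc (l ++ [a + 1, b - 1])).countP (fun x => decide (i ≤ x))
            + (if i = b then 1 else 0) := by
  intro i hi
  rw [countP_sortDesc]
  simp only [List.countP_append, List.countP_cons, List.countP_nil, decide_eq_true_eq]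
  split_ifs <;> omega

theorem stmt_13 (l : List ℕ) (a b : ℕ)
    (hsort : List.Pairwise (· ≥ ·) (l ++ [a, b]))
    (hpos : ∀ x ∈ l ++ [a, b], 0 < x) :
    ∀ i : ℕ, 1 ≤ i →
      (l ++ [a, b]).countP (fun x => decide (i ≤ x)) + (if i = a + 1 then 1 else 0)
        = (sortDesc (l ++ [a + 1, b - 1])).countP (fun x => decide (i ≤ x))
            + (if i = b then 1 else 0) :=
  stmt_13_general l a b
end
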